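/- Let (ν_x, ν_o) be jointly Gaussian with means (μ_x, μ_o) and positive definite covariance [[K_xx, K_xo],[K_xo, K_oo]], and let n_x, n_o be independent N(0, σ²), independent of (ν_x, ν_o). Define v = K_xx + 2σ² + K_oo − 2K_xo and assume v > 0. Then E[ν_x · 1_{ν_x + n_x > ν_o + n_o}] = μ_x·(1 − Φ((μ_o − μ_x)/√v)) + ((K_xx − K_xo)/√v)·φ((μ_o − μ_x)/√v). -/

import Mathlib

/-!
Put `D = νx + nx - νo - no`. Only the laws of linear combinations are known, so instead
of conditioning on `D` we differentiate `g t = E[(D + t νx)⁺]`. Each `D + t νx` is Gaussian,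
so `g` has the closed form `E[X⁺] = m (1 - Φ(-m/s)) + s φ(m/s)` for `X ~ N(m, s²)`; on the
other hand, since `D ≠ 0` almost surely, differentiation under the integral gives
`g' 0 = E[νx; D > 0]`.
-/

open Real MeasureTheory ProbabilityTheory

noncomputable def stdNormalPDF (x : ℝ) : ℝ := Real.exp (-x ^ 2 / 2) / Real.sqrt (2 * Real.pi)

noncomputable def stdNormalCDF (t : ℝ) : ℝ := ∫ s in Set.Iic t, stdNormalPDF s

open Set Filter Topology
open scoped NNReal

lemma stdNormalPDF_eq_gaussianPDFReal : stdNormalPDF = gaussianPDFReal 0 1 := by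
  ext x
  simp [stdNormalPDF, gaussianPDFReal, div_eq_inv_mul, mul_comm]

lemma stdNormalPDF_neg (x : ℝ) : stdNormalPDF (-x) = stdNormalPDF x := by
  simp [stdNormalPDF]

lemma continuous_stdNormalPDF : Continuous stdNormalPDF := by
  unfold stdNormalPDF
  fun_prop

lemma integrable_stdNormalPDF : Integrable stdNormalPDF := by
  rw [stdNormalPDF_eq_gaussianPDFReal]
  exact integrable_gaussianPDFReal 0 1

lemma integral_stdNormalPDF : ∫ x, stdNormalPDF x = 1 := by
  rw [stdNormalPDF_eq_gaussianPDFReal]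
  exact integral_gaussianPDFReal_eq_one 0 one_ne_zero

lemma integrable_mul_stdNormalPDF : Integrable fun x ↦ x * stdNormalPDF x := by
  have := (integrable_mul_exp_neg_mul_sq (one_half_pos (α := ℝ))).div_const √(2 * π)
  refine this.congr (ae_of_all _ fun x ↦ ?_)
  simp only [stdNormalPDF]
  ring_nf

lemma hasDerivAt_stdNormalPDF (x : ℝ) : HasDerivAt stdNormalPDF (-x * stdNormalPDF x) x := by
  have h : HasDerivAt (fun y ↦ -y ^ 2 / 2) (-x) x :=
    ((hasDerivAt_pow 2 x).neg.div_const 2).congr_deriv (by push_cast; ring)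
  exact (h.exp.div_const √(2 * π)).congr_deriv (by rw [stdNormalPDF]; ring)

lemma tendsto_stdNormalPDF_atTop : Tendsto stdNormalPDF atTop (𝓝 0) := by
  have h : Tendsto (fun x : ℝ ↦ -x ^ 2 / 2) atTop atBot :=
    (tendsto_neg_atTop_atBot.comp (tendsto_pow_atTop two_ne_zero)).atBot_div_const two_pos
  have h' := (tendsto_exp_atBot.comp h).div_const √(2 * π)
  rwa [zero_div] at h'

lemma hasDerivAt_stdNormalCDF (t : ℝ) : HasDerivAt stdNormalCDF (stdNormalPDF t) t := by
  have hsplit : ∀ u, stdNormalCDF u = stdNormalCDF 0 + ∫ x in (0 : ℝ)..u, stdNormalPDF x := by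
    intro u
    rw [stdNormalCDF, stdNormalCDF, ← intervalIntegral.integral_Iic_sub_Iic
      integrable_stdNormalPDF.integrableOn integrable_stdNormalPDF.integrableOn]
    ring
  rw [funext hsplit]
  exact (intervalIntegral.integral_hasDerivAt_right integrable_stdNormalPDF.intervalIntegrable
    (continuous_stdNormalPDF.stronglyMeasurableAtFilter _ _)
    continuous_stdNormalPDF.continuousAt).const_add _

lemma integral_Ioi_stdNormalPDF (a : ℝ) :
    ∫ x in Ioi a, stdNormalPDF x = 1 - stdNormalCDF a := by
  rw [← integral_stdNormalPDF, ← integral_add_compl measurableSet_Iic integrable_stdNormalPDF,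
    compl_Iic, stdNormalCDF]
  ring

lemma integral_Ioi_mul_stdNormalPDF (a : ℝ) :
    ∫ x in Ioi a, x * stdNormalPDF x = stdNormalPDF a := by
  have hderiv (x : ℝ) : HasDerivAt (fun y ↦ -stdNormalPDF y) (x * stdNormalPDF x) x :=
    (hasDerivAt_stdNormalPDF x).neg.congr_deriv (by ring)
  have h := integral_Ioi_of_hasDerivAt_of_tendsto' (a := a) (fun x _ ↦ hderiv x)
    integrable_mul_stdNormalPDF.integrableOn tendsto_stdNormalPDF_atTop.neg
  rw [h, neg_zero, zero_sub, neg_neg]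

noncomputable def normalPosPartMean (m s : ℝ) : ℝ :=
  m * (1 - stdNormalCDF (-m / s)) + s * stdNormalPDF (m / s)

lemma integral_stdNormalPDF_mul_max (m : ℝ) {s : ℝ} (hs : 0 < s) :
    ∫ z, stdNormalPDF z * max (s * z + m) 0 = normalPosPartMean m s := by
  have hind : (fun z ↦ stdNormalPDF z * max (s * z + m) 0) =
      (Ioi (-m / s)).indicator fun z ↦ s * (z * stdNormalPDF z) + m * stdNormalPDF z := by
    ext z
    by_cases hz : z ∈ Ioi (-m / s)
    · have : 0 ≤ s * z + m := by linarith [(div_lt_iff₀' hs).1 hz]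
      rw [indicator_of_mem hz, max_eq_left this]
      ring
    · have : s * z + m ≤ 0 := by linarith [(le_div_iff₀' hs).1 (not_lt.1 hz)]
      rw [indicator_of_notMem hz, max_eq_right this, mul_zero]
  rw [hind, integral_indicator measurableSet_Ioi,
    integral_add (integrable_mul_stdNormalPDF.integrableOn.const_mul s)
      (integrable_stdNormalPDF.integrableOn.const_mul m),
    integral_const_mul, integral_const_mul, integral_Ioi_mul_stdNormalPDF,
    integral_Ioi_stdNormalPDF, neg_div, stdNormalPDF_neg, normalPosPartMean, neg_div]
  ring

lemma integral_max_zero_gaussianReal (μ : ℝ) {v : ℝ≥0} (hv : v ≠ 0) :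
    ∫ x, max x 0 ∂gaussianReal μ v = normalPosPartMean μ √v := by
  have hlaw : HasLaw (fun z ↦ √v * z + μ) (gaussianReal μ v) (gaussianReal 0 1) := by
    convert gaussianReal_add_const (gaussianReal_const_mul HasLaw.id (√v : ℝ)) μ using 2
    · rfl
    · simp
    · rw [← NNReal.coe_inj]
      simp
  rw [← hlaw.integral_comp (by fun_prop), integral_gaussianReal_eq_integral_smul one_ne_zero,
    ← stdNormalPDF_eq_gaussianPDFReal]
  exact integral_stdNormalPDF_mul_max μ (sqrt_pos.2 (by positivity))

lemma HasDerivAt.normalPosPartMean {m s : ℝ → ℝ} {m' s' t : ℝ} (hm : HasDerivAt m m' t)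
    (hs : HasDerivAt s s' t) (hst : s t ≠ 0) :
    HasDerivAt (fun t ↦ normalPosPartMean (m t) (s t))
      (m' * (1 - stdNormalCDF (-m t / s t)) + s' * stdNormalPDF (m t / s t)) t := by
  set x' := (m' * s t - m t * s') / s t ^ 2
  have hx : HasDerivAt (fun t ↦ m t / s t) x' t := hm.div hs hst
  have hnx : HasDerivAt (fun t ↦ -m t / s t) (-x') t :=
    hx.neg.congr_of_eventuallyEq (.of_forall fun _ ↦ by simp [neg_div])
  have hΦ : HasDerivAt (fun t ↦ 1 - stdNormalCDF (-m t / s t))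
      (-(stdNormalPDF (m t / s t) * -x')) t := by
    rw [← stdNormalPDF_neg, ← neg_div]
    exact ((hasDerivAt_stdNormalCDF _).comp t hnx).const_sub 1
  have hφ : HasDerivAt (fun t ↦ stdNormalPDF (m t / s t))
      (-(m t / s t) * stdNormalPDF (m t / s t) * x') t :=
    (hasDerivAt_stdNormalPDF _).comp t hx
  refine ((hm.mul hΦ).add (hs.mul hφ)).congr_deriv ?_
  -- the terms carrying `x'` sum to `(m t - s t * (m t / s t)) * φ (m t / s t) * x' = 0`
  field_simp
  ring

lemma hasDerivAt_max_add_mul_zero {d : ℝ} (w : ℝ) (hd : d ≠ 0) :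
    HasDerivAt (fun t ↦ max (d + t * w) 0) (if 0 < d then w else 0) 0 := by
  have hlin : HasDerivAt (fun t ↦ d + t * w) w 0 := by
    simpa using ((hasDerivAt_id (0 : ℝ)).mul_const w).const_add d
  have hcont : Tendsto (fun t ↦ d + t * w) (𝓝 0) (𝓝 d) := by
    simpa using hlin.continuousAt.tendsto
  rcases hd.lt_or_gt with hneg | hpos
  · rw [if_neg hneg.not_gt]
    refine (hasDerivAt_const 0 0).congr_of_eventuallyEq ?_
    filter_upwards [hcont.eventually (gt_mem_nhds hneg)] with t ht using max_eq_right ht.le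
  · rw [if_pos hpos]
    refine hlin.congr_of_eventuallyEq ?_
    filter_upwards [hcont.eventually (lt_mem_nhds hpos)] with t ht using max_eq_left ht.le

lemma lipschitzWith_max_add_mul_zero (d w : ℝ) :
    LipschitzWith (Real.nnabs w) fun t ↦ max (d + t * w) 0 := by
  refine LipschitzWith.of_dist_le_mul fun t u ↦ ?_
  rw [Real.coe_nnabs, Real.dist_eq, Real.dist_eq]
  calc |max (d + t * w) 0 - max (d + u * w) 0| ≤ |d + t * w - (d + u * w)| :=
        abs_max_sub_max_le_abs _ _ _
    _ = |w| * |t - u| := by rw [← abs_mul]; ring_nf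

section Probability

variable {Ω : Type*} [MeasurableSpace Ω] {P : Measure Ω}

lemma hasDerivAt_integral_max_add_mul_zero {D W : Ω → ℝ} (hD : Integrable D P)
    (hW : Integrable W P) (hD0 : ∀ᵐ ω ∂P, D ω ≠ 0) :
    HasDerivAt (fun t ↦ ∫ ω, max (D ω + t * W ω) 0 ∂P)
      (∫ ω in {ω | 0 < D ω}, W ω ∂P) 0 := by
  have hset : NullMeasurableSet {ω | 0 < D ω} P :=
    nullMeasurableSet_lt aemeasurable_const hD.aemeasurable
  rw [← integral_indicator₀ hset]
  refine (hasDerivAt_integral_of_dominated_loc_of_lip (bound := fun ω ↦ |W ω|) univ_mem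
    (.of_forall fun t ↦ (hD.add (hW.const_mul t)).pos_part.aestronglyMeasurable)
    (by simpa using hD.pos_part) (hW.aestronglyMeasurable.indicator₀ hset)
    (.of_forall fun ω ↦ by
      simpa using (lipschitzWith_max_add_mul_zero (D ω) (W ω)).lipschitzOnWith (s := univ))
    hW.abs ?_).2
  filter_upwards [hD0] with ω hω
  simpa [indicator_apply] using hasDerivAt_max_add_mul_zero (W ω) hω

lemma hasLaw_of_map_eq {𝓧 : Type*} [MeasurableSpace 𝓧] {X : Ω → 𝓧} {μ : Measure 𝓧} [NeZero μ]
    (h : P.map X = μ) : HasLaw X μ P :=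
  ⟨.of_map_ne_zero (h ▸ NeZero.ne μ), h⟩

lemma ProbabilityTheory.HasLaw.integral_max_zero_of_gaussianReal {X : Ω → ℝ} {μ : ℝ} {v : ℝ≥0}
    (hX : HasLaw X (gaussianReal μ v) P) (hv : v ≠ 0) :
    ∫ ω, max (X ω) 0 ∂P = normalPosPartMean μ √v := by
  rw [← integral_map (f := fun x ↦ max x 0) hX.aemeasurable (by fun_prop), hX.map_eq,
    integral_max_zero_gaussianReal μ hv]

lemma ProbabilityTheory.HasLaw.ae_ne_of_gaussianReal {X : Ω → ℝ} {μ : ℝ} {v : ℝ≥0}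
    (hX : HasLaw X (gaussianReal μ v) P) (hv : v ≠ 0) (c : ℝ) : ∀ᵐ ω ∂P, X ω ≠ c := by
  have := nullSingletonClass_gaussianReal (μ := μ) hv
  exact (hX.ae_iff (p := (· ≠ c)) (by fun_prop)).2 (Measure.ae_ne _ c)

lemma setIntegral_pos_eq_of_hasLaw_add_mul {D W : Ω → ℝ} {m a v c k : ℝ} (hv : 0 < v)
    (hlaw : ∀ t : ℝ, HasLaw (fun ω ↦ D ω + t * W ω)
      (gaussianReal (m + t * a) (v + 2 * c * t + k * t ^ 2).toNNReal) P) :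
    ∫ ω in {ω | 0 < D ω}, W ω ∂P =
      a * (1 - stdNormalCDF (-m / √v)) + c / √v * stdNormalPDF (m / √v) := by
  set q : ℝ → ℝ := fun t ↦ v + 2 * c * t + k * t ^ 2
  have hint (t : ℝ) : Integrable (fun ω ↦ D ω + t * W ω) P :=
    (hlaw t).hasGaussianLaw.integrable
  have hD : Integrable D P := by simpa using hint 0
  have hW : Integrable W P := ((hint 1).sub (hint 0)).congr (.of_forall fun ω ↦ by simp)
  have hD0 : ∀ᵐ ω ∂P, D ω ≠ 0 :=
    (by simpa using hlaw 0 : HasLaw D _ P).ae_ne_of_gaussianReal (by simpa using hv) 0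
  have hg : (fun t ↦ ∫ ω, max (D ω + t * W ω) 0 ∂P) =ᶠ[𝓝 0]
      fun t ↦ normalPosPartMean (m + t * a) √(q t) := by
    have hq : ∀ᶠ t in 𝓝 0, 0 < q t :=
      (by fun_prop : Continuous q).continuousAt.eventually
        (lt_mem_nhds (by simpa [q] using hv))
    filter_upwards [hq] with t ht
    rw [(hlaw t).integral_max_zero_of_gaussianReal (by simpa using ht),
      Real.coe_toNNReal _ ht.le]
  have hq0 : q 0 = v := by simp [q]
  have hm : HasDerivAt (fun t ↦ m + t * a) a 0 := by
    simpa using ((hasDerivAt_id (0 : ℝ)).mul_const a).const_add m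
  have hs : HasDerivAt (fun t ↦ √(q t)) (c / √v) 0 := by
    have hq' : HasDerivAt q (2 * c) 0 := by
      refine ((((hasDerivAt_id (0 : ℝ)).const_mul (2 * c)).const_add v).add
        ((hasDerivAt_pow 2 (0 : ℝ)).const_mul k)).congr_deriv ?_
      simp
    refine (hq'.sqrt (by simpa [hq0] using hv.ne')).congr_deriv ?_
    rw [hq0]
    field_simp
  have hderiv := (HasDerivAt.normalPosPartMean hm hs (by simpa [hq0] using (sqrt_pos.2 hv).ne'))
    |>.congr_of_eventuallyEq hg
  rw [(hasDerivAt_integral_max_add_mul_zero hD hW hD0).unique hderiv, hq0]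
  simp

end Probability

theorem stmt6_general {Ω : Type*} [MeasurableSpace Ω] (P : Measure Ω)
    (νx νo nx no : Ω → ℝ) (μx μo Kxx Kxo Koo σ : ℝ)
    (hv : 0 < Kxx + 2 * σ ^ 2 + Koo - 2 * Kxo)
    (hjoint : ∀ a b c d : ℝ,
      Measure.map (fun ω => a * νx ω + b * νo ω + c * nx ω + d * no ω) P =
        gaussianReal (a * μx + b * μo)
          (Real.toNNReal (a ^ 2 * Kxx + 2 * a * b * Kxo + b ^ 2 * Koo +
            (c ^ 2 + d ^ 2) * σ ^ 2))) :
    ∫ ω in {ω | νx ω + nx ω > νo ω + no ω}, νx ω ∂P =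
      μx * (1 - stdNormalCDF ((μo - μx) / Real.sqrt (Kxx + 2 * σ ^ 2 + Koo - 2 * Kxo))) +
        ((Kxx - Kxo) / Real.sqrt (Kxx + 2 * σ ^ 2 + Koo - 2 * Kxo)) *
          stdNormalPDF ((μo - μx) / Real.sqrt (Kxx + 2 * σ ^ 2 + Koo - 2 * Kxo)) := by
  set v := Kxx + 2 * σ ^ 2 + Koo - 2 * Kxo
  set D : Ω → ℝ := fun ω ↦ νx ω + nx ω - νo ω - no ω
  have hlaw (t : ℝ) : HasLaw (fun ω ↦ D ω + t * νx ω)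
      (gaussianReal (μx - μo + t * μx) (v + 2 * (Kxx - Kxo) * t + Kxx * t ^ 2).toNNReal) P := by
    refine hasLaw_of_map_eq ?_
    convert hjoint (1 + t) (-1) 1 (-1) using 2
    · ext ω
      ring
    · ring
    · simp only [v]
      ring_nf
  have hset : {ω | νx ω + nx ω > νo ω + no ω} = {ω | 0 < D ω} := by
    ext ω
    simp only [mem_ofPred_eq, D]
    constructor <;> intro h <;> linarith
  rw [hset, setIntegral_pos_eq_of_hasLaw_add_mul hv hlaw, ← stdNormalPDF_neg, ← neg_div,
    neg_sub]

/-- `(νx, νo)` jointly Gaussian with means `(μx, μo)`, positive definite covariance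
`[[Kxx, Kxo],[Kxo, Koo]]`, and `nx, no` independent `N(0,σ²)` noises independent of `(νx, νo)`
(joint Gaussianity encoded by the law of every linear combination). With
`v = Kxx + 2σ² + Koo − 2Kxo > 0`,
`E[νx · 1_{νx + nx > νo + no}] = μx (1 − Φ((μo − μx)/√v)) + ((Kxx − Kxo)/√v) φ((μo − μx)/√v)`. -/
theorem stmt6 {Ω : Type*} [MeasurableSpace Ω] (P : Measure Ω) [IsProbabilityMeasure P]
    (νx νo nx no : Ω → ℝ) (μx μo Kxx Kxo Koo σ : ℝ)
    (hKxx : 0 < Kxx) (hKoo : 0 < Koo) (hpd : Kxo ^ 2 < Kxx * Koo)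
    (hv : 0 < Kxx + 2 * σ ^ 2 + Koo - 2 * Kxo)
    (hjoint : ∀ a b c d : ℝ,
      Measure.map (fun ω => a * νx ω + b * νo ω + c * nx ω + d * no ω) P =
        gaussianReal (a * μx + b * μo)
          (Real.toNNReal (a ^ 2 * Kxx + 2 * a * b * Kxo + b ^ 2 * Koo +
            (c ^ 2 + d ^ 2) * σ ^ 2))) :
    ∫ ω in {ω | νx ω + nx ω > νo ω + no ω}, νx ω ∂P =
      μx * (1 - stdNormalCDF ((μo - μx) / Real.sqrt (Kxx + 2 * σ ^ 2 + Koo - 2 * Kxo))) +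
        ((Kxx - Kxo) / Real.sqrt (Kxx + 2 * σ ^ 2 + Koo - 2 * Kxo)) *
          stdNormalPDF ((μo - μx) / Real.sqrt (Kxx + 2 * σ ^ 2 + Koo - 2 * Kxo)) :=
  stmt6_general P νx νo nx no μx μo Kxx Kxo Koo σ hv hjoint
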